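/- arXiv:2302.04685 — 2 statements merged into one kernel-verified Lean document; each statement's English description precedes it below -/
import Mathlib

section
/- In a resource category, for any finite multiset f of pointed morphisms A → B, the composite δ_B ∘ Πf equals the sum over all splittings f = f1 * f2 (over 2-partitionings of an enumeration of f) of (Πf1 ⊗ Πf2) ∘ δ_A, where Πf denotes the convolution product of the elements of f. -/
open CategoryTheory MonoidalCategory

universe v u

/-- An additive symmetric monoidal category: each hom-set is a commutative monoid and
composition and tensor preserve the additive structure. -/
class ASMC (C : Type u) [Category.{v} C] [MonoidalCategory C] where
  homMon : ∀ X Y : C, AddCommMonoid (X ⟶ Y)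
  comp_add : ∀ {X Y Z : C} (f : X ⟶ Y) (g h : Y ⟶ Z), f ≫ (g + h) = f ≫ g + f ≫ h
  add_comp : ∀ {X Y Z : C} (f g : X ⟶ Y) (h : Y ⟶ Z), (f + g) ≫ h = f ≫ h + g ≫ h
  comp_zero : ∀ {X Y Z : C} (f : X ⟶ Y), f ≫ (0 : Y ⟶ Z) = 0
  zero_comp : ∀ {X Y Z : C} (g : Y ⟶ Z), (0 : X ⟶ Y) ≫ g = 0
  add_tensorHom : ∀ {X Y Z W : C} (f g : X ⟶ Y) (h : Z ⟶ W),
    (f + g) ⊗ₘ h = f ⊗ₘ h + g ⊗ₘ h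
  tensorHom_add : ∀ {X Y Z W : C} (f : X ⟶ Y) (g h : Z ⟶ W),
    f ⊗ₘ (g + h) = f ⊗ₘ g + f ⊗ₘ h
  zero_tensorHom : ∀ {X Y Z W : C} (h : Z ⟶ W), (0 : X ⟶ Y) ⊗ₘ h = 0
  tensorHom_zero : ∀ {X Y Z W : C} (f : X ⟶ Y), f ⊗ₘ (0 : Z ⟶ W) = 0

attribute [instance] ASMC.homMon

variable (C : Type u) [Category.{v} C] [MonoidalCategory C] [SymmetricCategory C]

/-- The middle-four interchange `(A ⊗ B) ⊗ (A' ⊗ B') ≅ (A ⊗ A') ⊗ (B ⊗ B')`. -/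
def mid (A B A' B' : C) : (A ⊗ B) ⊗ (A' ⊗ B') ⟶ (A ⊗ A') ⊗ (B ⊗ B') :=
  (α_ A B (A' ⊗ B')).hom ≫
    (A ◁ ((α_ B A' B').inv ≫ ((β_ B A').hom ▷ B') ≫ (α_ A' B B').hom)) ≫
    (α_ A A' (B ⊗ B')).inv

variable [ASMC C]

/-- A (commutative) bialgebra structure on every object, compatible with the monoidal
structure. -/
structure BialgStruct where
  δ : ∀ A : C, A ⟶ A ⊗ A
  ε : ∀ A : C, A ⟶ 𝟙_ C
  μ : ∀ A : C, A ⊗ A ⟶ A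
  η : ∀ A : C, 𝟙_ C ⟶ A
  coassoc : ∀ A, δ A ≫ (δ A ▷ A) ≫ (α_ A A A).hom = δ A ≫ (A ◁ δ A)
  counit_l : ∀ A, δ A ≫ (ε A ▷ A) = (λ_ A).inv
  counit_r : ∀ A, δ A ≫ (A ◁ ε A) = (ρ_ A).inv
  cocomm : ∀ A, δ A ≫ (β_ A A).hom = δ A
  assoc : ∀ A, (α_ A A A).hom ≫ (A ◁ μ A) ≫ μ A = (μ A ▷ A) ≫ μ A
  unit_l : ∀ A, (η A ▷ A) ≫ μ A = (λ_ A).hom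
  unit_r : ∀ A, (A ◁ η A) ≫ μ A = (ρ_ A).hom
  comm : ∀ A, (β_ A A).hom ≫ μ A = μ A
  bialg : ∀ A, μ A ≫ δ A = (δ A ⊗ₘ δ A) ≫ mid C A A A A ≫ (μ A ⊗ₘ μ A)
  η_δ : ∀ A, η A ≫ δ A = (λ_ (𝟙_ C)).inv ≫ (η A ⊗ₘ η A)
  μ_ε : ∀ A, μ A ≫ ε A = (ε A ⊗ₘ ε A) ≫ (λ_ (𝟙_ C)).hom
  η_ε : ∀ A, η A ≫ ε A = 𝟙 (𝟙_ C)
  δ_tensor : ∀ A B, δ (A ⊗ B) = (δ A ⊗ₘ δ B) ≫ mid C A A B B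
  ε_tensor : ∀ A B, ε (A ⊗ B) = (ε A ⊗ₘ ε B) ≫ (λ_ (𝟙_ C)).hom
  ε_unit : ε (𝟙_ C) = 𝟙 (𝟙_ C)
  μ_tensor : ∀ A B, μ (A ⊗ B) = mid C A B A B ≫ (μ A ⊗ₘ μ B)
  η_tensor : ∀ A B, η (A ⊗ B) = (λ_ (𝟙_ C)).inv ≫ (η A ⊗ₘ η B)
  η_unit : η (𝟙_ C) = 𝟙 (𝟙_ C)

/-- A resource category structure: a bialgebra on every object together with pointed
identities satisfying the laws of pointed identities. -/
structure ResourceStruct extends BialgStruct C where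
  pid : ∀ A : C, A ⟶ A
  pid_idem : ∀ A, pid A ≫ pid A = pid A
  pid_ε : ∀ A, pid A ≫ ε A = 0
  η_pid : ∀ A, η A ≫ pid A = 0
  pid_δ : ∀ A, pid A ≫ δ A =
    pid A ≫ (ρ_ A).inv ≫ (A ◁ η A) + pid A ≫ (λ_ A).inv ≫ (η A ▷ A)
  μ_pid : ∀ A, μ A ≫ pid A =
    (A ◁ ε A) ≫ (ρ_ A).hom ≫ pid A + (ε A ▷ A) ≫ (λ_ A).hom ≫ pid A

variable {C}

/-- The convolution product `f * g = μ ∘ (f ⊗ g) ∘ δ`. -/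
def conv (R : BialgStruct C) {A B : C} (f g : A ⟶ B) : A ⟶ B :=
  R.δ A ≫ (f ⊗ₘ g) ≫ R.μ B

/-- The convolution unit `1 = η ∘ ε`. -/
def convOne (R : BialgStruct C) (A B : C) : A ⟶ B := R.ε A ≫ R.η B

/-- The product `Π[f₁,…,fₙ] = f₁ * ⋯ * fₙ` of a bag (enumerated as a list) of
morphisms, with `Π[] = 1`. -/
def prodL (R : BialgStruct C) {A B : C} (l : List (A ⟶ B)) : A ⟶ B :=
  l.foldr (conv R) (convOne R A B)

/-- A morphism is pointed when `id• ∘ f = f`. -/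
def IsPointedHom (R : ResourceStruct C) {A B : C} (f : A ⟶ B) : Prop := f ≫ R.pid B = f

/-- The sublist of `l` selected by the positions the 2-partitioning `p` sends to `i`. -/
def selH {A B : C} (l : List (A ⟶ B)) (p : Fin l.length → Fin 2) (i : Fin 2) :
    List (A ⟶ B) :=
  ((List.finRange l.length).filter (fun j => p j = i)).map l.get

/-!
Induction on the list. The comultiplication is a homomorphism for convolution,
`δ ∘ (f * g) = (δ ∘ f) * (δ ∘ g)` with the convolution of `A ⟶ B ⊗ B` on the right: this is
the bialgebra law `μ ≫ δ = (δ ⊗ δ) ≫ μ_{B ⊗ B}`. On that side, maps of the form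
`(a ⊗ b) ∘ δ` convolve componentwise, because cocommutativity makes `δ_A` itself
comultiplicative. A pointed `f` is primitive, `δ ∘ f = (f ⊗ 1) ∘ δ + (1 ⊗ f) ∘ δ`, so
expanding `(δ ∘ f) * (δ ∘ Πt)` bilinearly places `f` in the first or in the second factor of
every splitting of `t`.
-/

section Bialgebra

variable {C : Type*} [Category C] [MonoidalCategory C] [SymmetricCategory C]

lemma mid_eq_tensorμ (A B A' B' : C) : mid C A B A' B' = tensorμ A B A' B' := by
  simp [mid, tensorμ]

lemma mid_natural {A B A' B' X Y X' Y' : C} (a : A ⟶ X) (b : B ⟶ Y) (c : A' ⟶ X')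
    (d : B' ⟶ Y') :
    ((a ⊗ₘ b) ⊗ₘ (c ⊗ₘ d)) ≫ mid C X Y X' Y' = mid C A B A' B' ≫ ((a ⊗ₘ c) ⊗ₘ (b ⊗ₘ d)) := by
  simp only [mid_eq_tensorμ, tensorμ_natural]

lemma mid_comp_mid (A B A' B' : C) : mid C A B A' B' ≫ mid C A A' B B' = 𝟙 _ := by
  have : tensorμ A A' B B' = tensorδ A B A' B' := by
    simp [tensorμ, tensorδ, SymmetricCategory.braiding_swap_eq_inv_braiding]
  rw [mid_eq_tensorμ, mid_eq_tensorμ, this, tensorμ_tensorδ]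

namespace BialgStruct

variable (R : BialgStruct C)

lemma prodL_cons {A B : C} (f : A ⟶ B) (l : List (A ⟶ B)) :
    prodL R (f :: l) = conv R f (prodL R l) := rfl

lemma conv_tensorHom {A A' B B' : C} (a c : A ⟶ B) (b d : A' ⟶ B') :
    conv R (a ⊗ₘ b) (c ⊗ₘ d) = conv R a c ⊗ₘ conv R b d := by
  simp only [conv, R.δ_tensor, R.μ_tensor, Category.assoc, reassoc_of% mid_natural,
    reassoc_of% mid_comp_mid, tensorHom_comp_tensorHom]

lemma comp_conv_of_comul {X A B : C} (h : X ⟶ A) (hh : h ≫ R.δ A = R.δ X ≫ (h ⊗ₘ h))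
    (x y : A ⟶ B) : conv R (h ≫ x) (h ≫ y) = h ≫ conv R x y := by
  simp only [conv, ← tensorHom_comp_tensorHom, reassoc_of% hh, Category.assoc]

lemma conv_comp_of_mul {A B Y : C} (k : B ⟶ Y) (hk : R.μ B ≫ k = (k ⊗ₘ k) ≫ R.μ Y)
    (x y : A ⟶ B) : conv R (x ≫ k) (y ≫ k) = conv R x y ≫ k := by
  simp only [conv, ← tensorHom_comp_tensorHom, hk, Category.assoc]

lemma μ_comp_δ (B : C) : R.μ B ≫ R.δ B = (R.δ B ⊗ₘ R.δ B) ≫ R.μ (B ⊗ B) := by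
  rw [R.bialg, R.μ_tensor]

lemma conv_comp_δ {A B : C} (f g : A ⟶ B) :
    conv R f g ≫ R.δ B = conv R (f ≫ R.δ B) (g ≫ R.δ B) :=
  (R.conv_comp_of_mul _ (R.μ_comp_δ B) f g).symm

lemma δ_comp_tensorHom_δ_δ (A : C) :
    R.δ A ≫ (R.δ A ⊗ₘ R.δ A) = R.δ A ≫ A ◁ (R.δ A ≫ A ◁ R.δ A) ≫ (α_ A A (A ⊗ A)).inv := by
  rw [MonoidalCategory.tensorHom_def, tensor_whiskerLeft, reassoc_of% R.coassoc]
  simp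

lemma δ_comp_whiskerLeft_δ_comp_braiding (A : C) :
    R.δ A ≫ A ◁ R.δ A ≫ (α_ A A A).inv ≫ (β_ A A).hom ▷ A ≫ (α_ A A A).hom =
      R.δ A ≫ A ◁ R.δ A := by
  calc _ = (R.δ A ≫ A ◁ R.δ A) ≫ (α_ A A A).inv ≫ (β_ A A).hom ▷ A ≫ (α_ A A A).hom := by
        simp only [Category.assoc]
    _ = R.δ A ≫ (R.δ A ≫ (β_ A A).hom) ▷ A ≫ (α_ A A A).hom := by
        rw [← R.coassoc]; simp
    _ = R.δ A ≫ A ◁ R.δ A := by rw [R.cocomm, R.coassoc]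

lemma δ_comp_δ (A : C) : R.δ A ≫ R.δ (A ⊗ A) = R.δ A ≫ (R.δ A ⊗ₘ R.δ A) := by
  rw [R.δ_tensor, mid, reassoc_of% R.δ_comp_tensorHom_δ_δ]
  simp only [Category.assoc, Iso.inv_hom_id_assoc, ← whiskerLeft_comp_assoc]
  rw [R.δ_comp_whiskerLeft_δ_comp_braiding, R.δ_comp_tensorHom_δ_δ]

lemma conv_δ_comp_tensorHom {A B : C} (a b c d : A ⟶ B) :
    conv R (R.δ A ≫ (a ⊗ₘ b)) (R.δ A ≫ (c ⊗ₘ d)) = R.δ A ≫ (conv R a c ⊗ₘ conv R b d) := by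
  rw [R.comp_conv_of_comul _ (R.δ_comp_δ A), conv_tensorHom]

lemma δ_comp_tensorHom_ε_comp {A B B' : C} (f : A ⟶ B) (g : 𝟙_ C ⟶ B') :
    R.δ A ≫ (f ⊗ₘ (R.ε A ≫ g)) = f ≫ (ρ_ B).inv ≫ B ◁ g := by
  rw [tensorHom_def', MonoidalCategory.whiskerLeft_comp_assoc, whisker_exchange,
    reassoc_of% R.counit_r, rightUnitor_inv_naturality_assoc]

lemma δ_comp_ε_comp_tensorHom {A B B' : C} (g : 𝟙_ C ⟶ B') (f : A ⟶ B) :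
    R.δ A ≫ ((R.ε A ≫ g) ⊗ₘ f) = f ≫ (λ_ B).inv ≫ g ▷ B := by
  rw [MonoidalCategory.tensorHom_def, comp_whiskerRight_assoc, ← whisker_exchange,
    reassoc_of% R.counit_l, leftUnitor_inv_naturality_assoc]

lemma convOne_conv {A B : C} (f : A ⟶ B) : conv R (convOne R A B) f = f := by
  rw [conv, convOne, reassoc_of% R.δ_comp_ε_comp_tensorHom, R.unit_l, Iso.inv_hom_id,
    Category.comp_id]

lemma convOne_comp_δ (A B : C) :
    convOne R A B ≫ R.δ B = R.δ A ≫ (convOne R A B ⊗ₘ convOne R A B) := by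
  rw [convOne, Category.assoc, R.η_δ, R.δ_comp_tensorHom_ε_comp, Category.assoc,
    rightUnitor_inv_naturality_assoc, ← MonoidalCategory.tensorHom_def, unitors_inv_equal]

end BialgStruct

variable [ASMC C]

namespace BialgStruct

variable (R : BialgStruct C)

lemma conv_add_left {A B : C} (f g h : A ⟶ B) : conv R (f + g) h = conv R f h + conv R g h := by
  rw [conv, ASMC.add_tensorHom, ASMC.add_comp, ASMC.comp_add, conv, conv]

lemma conv_add_right {A B : C} (f g h : A ⟶ B) : conv R f (g + h) = conv R f g + conv R f h := by
  rw [conv, ASMC.tensorHom_add, ASMC.add_comp, ASMC.comp_add, conv, conv]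

lemma conv_zero_right {A B : C} (f : A ⟶ B) : conv R f 0 = 0 := by
  rw [conv, ASMC.tensorHom_zero, ASMC.zero_comp, ASMC.comp_zero]

lemma conv_sum_right {ι : Type*} (s : Finset ι) {A B : C} (f : A ⟶ B) (g : ι → (A ⟶ B)) :
    conv R f (∑ i ∈ s, g i) = ∑ i ∈ s, conv R f (g i) := by
  induction s using Finset.cons_induction with
  | empty => simp only [Finset.sum_empty, conv_zero_right]
  | cons i s hi ih => rw [Finset.sum_cons, Finset.sum_cons, conv_add_right, ih]

end BialgStruct

lemma IsPointedHom.comp_δ {R : ResourceStruct C} {A B : C} {f : A ⟶ B} (hf : IsPointedHom R f) :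
    f ≫ R.δ B = R.δ A ≫ (f ⊗ₘ convOne R.toBialgStruct A B)
      + R.δ A ≫ (convOne R.toBialgStruct A B ⊗ₘ f) := by
  rw [convOne, R.δ_comp_tensorHom_ε_comp, R.δ_comp_ε_comp_tensorHom, ← hf, Category.assoc,
    R.pid_δ, ASMC.comp_add]
  simp only [Category.assoc]

end Bialgebra

section Splittings

variable {C : Type*} [Category C] {A B : C}

lemma selH_cons_finCons (f : A ⟶ B) (t : List (A ⟶ B)) (i : Fin 2) (q : Fin t.length → Fin 2)
    (j : Fin 2) :
    selH (f :: t) (Fin.cons i q) j = if i = j then f :: selH t q j else selH t q j := by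
  split_ifs <;> simp [selH, List.finRange_succ, List.filter_map, Function.comp_def, *]

lemma sum_selH_cons {M : Type*} [AddCommMonoid M] (F : List (A ⟶ B) → List (A ⟶ B) → M)
    (f : A ⟶ B) (t : List (A ⟶ B)) :
    ∑ p : Fin (f :: t).length → Fin 2, F (selH (f :: t) p 0) (selH (f :: t) p 1) =
      ∑ q : Fin t.length → Fin 2, (F (f :: selH t q 0) (selH t q 1) +
        F (selH t q 0) (f :: selH t q 1)) := by
  refine (Fintype.sum_equiv (Fin.consEquiv fun _ => Fin 2) _ _ fun _ => rfl).symm.trans ?_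
  simp [Fintype.sum_prod_type, Fin.consEquiv, selH_cons_finCons, Finset.sum_add_distrib]

end Splittings

/-- in a resource category, for any bag `f` of pointed morphisms
`A ⟶ B`, `δ_B ∘ Πf` equals the sum over all splittings `f = f₁ * f₂` (2-partitionings
of an enumeration of `f`) of `(Πf₁ ⊗ Πf₂) ∘ δ_A`. -/
theorem comul_comp_prod {C : Type u} [Category.{v} C] [MonoidalCategory C]
    [SymmetricCategory C] [ASMC C] (R : ResourceStruct C) {A B : C}
    (l : List (A ⟶ B)) (hl : ∀ f ∈ l, IsPointedHom R f) :
    prodL R.toBialgStruct l ≫ R.δ B =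
      ∑ p : Fin l.length → Fin 2,
        R.δ A ≫ (prodL R.toBialgStruct (selH l p 0) ⊗ₘ prodL R.toBialgStruct (selH l p 1)) := by
  induction l with
  | nil =>
    simp only [List.length_nil, Fintype.sum_unique]
    exact R.convOne_comp_δ A B
  | cons f t ih =>
    have hf : IsPointedHom R f := hl f List.mem_cons_self
    have ht := ih fun g hg => hl g (List.mem_cons_of_mem f hg)
    rw [sum_selH_cons fun l₀ l₁ => R.δ A ≫ (prodL R.toBialgStruct l₀ ⊗ₘ prodL R.toBialgStruct l₁),
      R.prodL_cons, R.conv_comp_δ, hf.comp_δ, ht, R.conv_add_left, R.conv_sum_right,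
      R.conv_sum_right, ← Finset.sum_add_distrib]
    simp only [R.conv_δ_comp_tensorHom, R.convOne_conv, R.prodL_cons]
end

section
/- In a resource category, composing the pointed identity with a product of a bag of pointed morphisms picks out singletons: for any finite multiset f of pointed morphisms A → B, id•_B ∘ Πf equals v if f is the singleton [v], and equals 0 otherwise. -/
open CategoryTheory MonoidalCategory

universe v u

variable (C : Type u) [Category.{v} C] [MonoidalCategory C] [SymmetricCategory C]

variable [ASMC C]

variable {C}

/-!
`id•` kills the convolution unit because `η ≫ id• = 0`. On a convolution `f * g`, the law for
`μ ≫ id•` leaves only terms in which `ε` is applied to `f` or to `g`; a pointed morphism `h` has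
`h ≫ ε = h ≫ id• ≫ ε = 0`, and `(f * g) ≫ ε = 0` as soon as `f ≫ ε = 0` since `ε` is
multiplicative. So `id• ∘ Πl = 0` whenever `l` has zero or at least two entries, while
`Π[v] = v * 1 = v` is pointed.
-/

section
variable {C : Type u} [Category.{v} C] [MonoidalCategory C] [SymmetricCategory C]

theorem conv_convOne (R : BialgStruct C) {A B : C} (v : A ⟶ B) :
    conv R v (convOne R A B) = v := by
  calc R.δ A ≫ (v ⊗ₘ (R.ε A ≫ R.η B)) ≫ R.μ B
      = (R.δ A ≫ A ◁ R.ε A) ≫ v ▷ 𝟙_ C ≫ (B ◁ R.η B ≫ R.μ B) := by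
        rw [← whiskerLeft_comp_tensorHom, MonoidalCategory.tensorHom_def]
        simp only [Category.assoc]
    _ = v := by rw [R.counit_r, R.unit_r, rightUnitor_naturality, Iso.inv_hom_id_assoc]

theorem prodL_singleton (R : BialgStruct C) {A B : C} (v : A ⟶ B) : prodL R [v] = v :=
  conv_convOne R v

variable [ASMC C]

theorem IsPointedHom.comp_ε {R : ResourceStruct C} {A B : C} {f : A ⟶ B}
    (hf : IsPointedHom R f) : f ≫ R.ε B = 0 := by
  rw [← hf, Category.assoc, R.pid_ε, ASMC.comp_zero]

theorem convOne_comp_pid (R : ResourceStruct C) (A B : C) :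
    convOne R.toBialgStruct A B ≫ R.pid B = 0 := by
  rw [convOne, Category.assoc, R.η_pid, ASMC.comp_zero]

theorem conv_comp_ε_of_comp_ε_left (R : BialgStruct C) {A B : C} {f : A ⟶ B} (g : A ⟶ B)
    (hf : f ≫ R.ε B = 0) : conv R f g ≫ R.ε B = 0 := by
  rw [conv, Category.assoc, Category.assoc, R.μ_ε, tensorHom_comp_tensorHom_assoc, hf,
    ASMC.zero_tensorHom, ASMC.zero_comp, ASMC.comp_zero]

theorem conv_comp_pid_of_comp_ε (R : ResourceStruct C) {A B : C} {f g : A ⟶ B}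
    (hf : f ≫ R.ε B = 0) (hg : g ≫ R.ε B = 0) : conv R.toBialgStruct f g ≫ R.pid B = 0 := by
  have hright : (f ⊗ₘ g) ≫ B ◁ R.ε B = 0 := by
    rw [tensorHom_comp_whiskerLeft, hg, ASMC.tensorHom_zero]
  have hleft : (f ⊗ₘ g) ≫ R.ε B ▷ B = 0 := by
    rw [tensorHom_comp_whiskerRight, hf, ASMC.zero_tensorHom]
  rw [conv, Category.assoc, Category.assoc, R.μ_pid, ASMC.comp_add, ← Category.assoc _ (_ ◁ _),
    ← Category.assoc _ (_ ▷ _), hright, hleft, ASMC.zero_comp, ASMC.zero_comp, add_zero,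
    ASMC.comp_zero]

theorem prodL_cons_cons_comp_pid (R : ResourceStruct C) {A B : C} {f g : A ⟶ B}
    (hf : IsPointedHom R f) (hg : IsPointedHom R g) (l : List (A ⟶ B)) :
    prodL R.toBialgStruct (f :: g :: l) ≫ R.pid B = 0 :=
  conv_comp_pid_of_comp_ε R hf.comp_ε (conv_comp_ε_of_comp_ε_left _ _ hg.comp_ε)

end

/-- in a resource category, composing the pointed identity with the
product of a bag of pointed morphisms picks out singletons: `id•_B ∘ Πf = v` if
`f = [v]`, and `0` otherwise. -/
theorem pid_comp_prod {C : Type u} [Category.{v} C] [MonoidalCategory C]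
    [SymmetricCategory C] [ASMC C] (R : ResourceStruct C) {A B : C}
    (l : List (A ⟶ B)) (hl : ∀ f ∈ l, IsPointedHom R f) :
    (∀ v : A ⟶ B, l = [v] → prodL R.toBialgStruct l ≫ R.pid B = v) ∧
    ((∀ v : A ⟶ B, l ≠ [v]) → prodL R.toBialgStruct l ≫ R.pid B = 0) := by
  refine ⟨?_, fun hne => ?_⟩
  · rintro v rfl
    rw [prodL_singleton]
    exact hl v (List.mem_singleton_self v)
  · match l, hl with
    | [], _ => exact convOne_comp_pid R A B
    | [v], _ => exact absurd rfl (hne v)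
    | f :: g :: l, hl =>
      exact prodL_cons_cons_comp_pid R (hl f (by simp)) (hl g (by simp)) l
end
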